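/- arXiv:math/0604164 — 2 statements merged into one kernel-verified Lean document; each statement's English description precedes it below -/
import Mathlib

section
/- For every (s,φ), the squared norm of the cross product of the partial derivatives of α satisfies ‖∂α/∂s(s,φ) × ∂α/∂φ(s,φ)‖² = r(s)⁴·(√(1−r'(s)²)·κ(s)·cos φ + r''(s) − (1−r'(s)²)/r(s))². -/
open scoped RealInnerProductSpace ContDiff

noncomputable def cross3 (u v : EuclideanSpace ℝ (Fin 3)) : EuclideanSpace ℝ (Fin 3) :=
  (WithLp.equiv 2 (Fin 3 → ℝ)).symm
    ![u 1 * v 2 - u 2 * v 1, u 2 * v 0 - u 0 * v 2, u 0 * v 1 - u 1 * v 0]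

lemma inner_sc (u v : EuclideanSpace ℝ (Fin 3)) : ⟪u, v⟫ = u 0 * v 0 + u 1 * v 1 + u 2 * v 2 := by
  simp [PiLp.inner_apply, Fin.sum_univ_three, mul_comm]

lemma cross3_apply (u v : EuclideanSpace ℝ (Fin 3)) :
    cross3 u v = ![u 1 * v 2 - u 2 * v 1, u 2 * v 0 - u 0 * v 2, u 0 * v 1 - u 1 * v 0] := rfl

lemma lagrange (u v : EuclideanSpace ℝ (Fin 3)) :
    ⟪cross3 u v, cross3 u v⟫ = ⟪u,u⟫ * ⟪v,v⟫ - ⟪u,v⟫^2 := by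
  simp only [inner_sc, cross3_apply]
  simp [Matrix.cons_val_zero, Matrix.cons_val_one]
  ring

lemma inner_cross3_left (u v : EuclideanSpace ℝ (Fin 3)) : ⟪u, cross3 u v⟫ = 0 := by
  simp only [inner_sc, cross3_apply]
  simp [Matrix.cons_val_zero, Matrix.cons_val_one]
  ring

lemma inner_cross3_right (u v : EuclideanSpace ℝ (Fin 3)) : ⟪v, cross3 u v⟫ = 0 := by
  simp only [inner_sc, cross3_apply]
  simp [Matrix.cons_val_zero, Matrix.cons_val_one]
  ring

lemma cross3_smul_left (a : ℝ) (u v : EuclideanSpace ℝ (Fin 3)) :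
    cross3 (a • u) v = a • cross3 u v := by
  ext i; fin_cases i <;>
    simp [cross3, PiLp.smul_apply, Matrix.cons_val_zero, Matrix.cons_val_one, Matrix.head_cons] <;>
    ring

lemma cross3_smul_right (a : ℝ) (u v : EuclideanSpace ℝ (Fin 3)) :
    cross3 u (a • v) = a • cross3 u v := by
  ext i; fin_cases i <;>
    simp [cross3, PiLp.smul_apply, Matrix.cons_val_zero, Matrix.cons_val_one, Matrix.head_cons] <;>
    ring

lemma cross3_add_right (u v w : EuclideanSpace ℝ (Fin 3)) :
    cross3 u (v + w) = cross3 u v + cross3 u w := by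
  ext i; fin_cases i <;>
    simp [cross3, PiLp.add_apply, Matrix.cons_val_zero, Matrix.cons_val_one, Matrix.head_cons] <;>
    ring

lemma cross3_self (u : EuclideanSpace ℝ (Fin 3)) : cross3 u u = 0 := by
  ext i; fin_cases i <;>
    simp [cross3, Matrix.cons_val_zero, Matrix.cons_val_one, Matrix.head_cons] <;> ring

lemma cross3_triple (u v : EuclideanSpace ℝ (Fin 3)) :
    cross3 u (cross3 u v) = ⟪u,v⟫ • u - ⟪u,u⟫ • v := by
  ext i; fin_cases i <;>
  · simp only [inner_sc]
    simp [cross3, inner_sc, Fin.sum_univ_three, PiLp.sub_apply, PiLp.smul_apply,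
      Matrix.cons_val_zero, Matrix.cons_val_one, Matrix.head_cons]
    ring

lemma hasDerivAt_euc {f : ℝ → EuclideanSpace ℝ (Fin 3)} {f' : EuclideanSpace ℝ (Fin 3)} {s : ℝ} :
    HasDerivAt f f' s ↔ ∀ i, HasDerivAt (fun x => f x i) (f' i) s := by
  constructor
  · intro h i
    exact (EuclideanSpace.proj i (𝕜 := ℝ)).hasFDerivAt.comp_hasDerivAt s h
  · intro h
    have h2 : HasDerivAt (fun x => (fun i => f x i : Fin 3 → ℝ)) (fun i => f' i) s :=
      hasDerivAt_pi.2 h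
    exact ((PiLp.continuousLinearEquiv 2 ℝ (fun _ : Fin 3 => ℝ)).symm.hasFDerivAt).comp_hasDerivAt s h2

lemma HasDerivAt.cross3' {f g : ℝ → EuclideanSpace ℝ (Fin 3)} {f' g' : EuclideanSpace ℝ (Fin 3)}
    {s : ℝ} (hf : HasDerivAt f f' s) (hg : HasDerivAt g g' s) :
    HasDerivAt (fun x => cross3 (f x) (g x)) (cross3 f' (g s) + cross3 (f s) g') s := by
  rw [hasDerivAt_euc] at hf hg ⊢
  intro i
  fin_cases i
  · exact ((((hf 1).mul (hg 2)).sub ((hf 2).mul (hg 1)))).congr_deriv (by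
      show _ = (cross3 f' (g s) + cross3 (f s) g') 0
      simp only [cross3, WithLp.equiv_symm_apply, WithLp.ofLp_toLp, PiLp.add_apply, Matrix.cons_val_zero]
      ring)
  · exact ((((hf 2).mul (hg 0)).sub ((hf 0).mul (hg 2)))).congr_deriv (by
      show _ = (cross3 f' (g s) + cross3 (f s) g') 1
      simp only [cross3, WithLp.equiv_symm_apply, WithLp.ofLp_toLp, PiLp.add_apply, Matrix.cons_val_one,
        Matrix.head_cons, Matrix.cons_val_zero]
      ring)
  · exact ((((hf 0).mul (hg 1)).sub ((hf 1).mul (hg 0)))).congr_deriv (by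
      show _ = (cross3 f' (g s) + cross3 (f s) g') 2
      simp only [cross3, WithLp.equiv_symm_apply, WithLp.ofLp_toLp, PiLp.add_apply, Matrix.cons_val_two,
        Matrix.tail_cons, Matrix.head_cons]
      ring)

theorem canal_surface_area_element
    (c : ℝ → EuclideanSpace ℝ (Fin 3)) (r κ τ : ℝ → ℝ)
    (t n b : ℝ → EuclideanSpace ℝ (Fin 3))
    (hc : ContDiff ℝ (⊤ : ℕ∞) c) (hr : ContDiff ℝ (⊤ : ℕ∞) r)
    (harc : ∀ s, ‖deriv c s‖ = 1)
    (hκ : ∀ s, κ s = ‖deriv (deriv c) s‖)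
    (hκpos : ∀ s, 0 < κ s)
    (ht : ∀ s, t s = deriv c s)
    (hn : ∀ s, n s = (κ s)⁻¹ • deriv (deriv c) s)
    (hb : ∀ s, b s = cross3 (t s) (n s))
    (hτ : ∀ s, deriv n s = (-κ s) • t s + τ s • b s)
    (hrpos : ∀ s, 0 < r s)
    (hr1 : ∀ s, |deriv r s| < 1)
    (α : ℝ → ℝ → EuclideanSpace ℝ (Fin 3))
    (hα : ∀ s φ, α s φ = c s - (r s * deriv r s) • t s +
      (r s * Real.sqrt (1 - deriv r s ^ 2)) • (Real.cos φ • n s + Real.sin φ • b s)) :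
    ∀ s φ, ‖cross3 (deriv (fun u => α u φ) s) (deriv (fun v => α s v) φ)‖ ^ 2 =
      r s ^ 4 * (Real.sqrt (1 - deriv r s ^ 2) * κ s * Real.cos φ +
        deriv (deriv r) s - (1 - deriv r s ^ 2) / r s) ^ 2 := by
  intro s φ
  -- smoothness
  have h1i : (∞ : WithTop ℕ∞) ≠ 0 := by simp
  have hcI : ContDiff ℝ ∞ c := hc.of_le (by simp)
  have hrI : ContDiff ℝ ∞ r := hr.of_le (by simp)
  have hc' : ContDiff ℝ ∞ (deriv c) := (contDiff_infty_iff_deriv.mp hcI).2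
  have hc'' : ContDiff ℝ ∞ (deriv (deriv c)) := (contDiff_infty_iff_deriv.mp hc').2
  have hr' : ContDiff ℝ ∞ (deriv r) := (contDiff_infty_iff_deriv.mp hrI).2
  have hr'' : ContDiff ℝ ∞ (deriv (deriv r)) := (contDiff_infty_iff_deriv.mp hr').2
  have htfun : t = deriv c := funext ht
  have hnfun : n = fun u => (κ u)⁻¹ • deriv (deriv c) u := funext hn
  have hbfun : b = fun u => cross3 (t u) (n u) := funext hb
  have hκfun : κ = fun u => ‖deriv (deriv c) u‖ := funext hκ
  have hκne : ∀ u, κ u ≠ 0 := fun u => ne_of_gt (hκpos u)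
  have hc''ne : ∀ u, deriv (deriv c) u ≠ 0 := by
    intro u
    have h := hκpos u
    rw [hκ u] at h
    exact norm_pos_iff.mp h
  have hκdiff : ∀ u, DifferentiableAt ℝ κ u := by
    intro u
    rw [hκfun]
    exact ((hc''.differentiable h1i) u).norm ℝ (hc''ne u)
  have hndiff : ∀ u, DifferentiableAt ℝ n u := by
    intro u
    rw [hnfun]
    exact ((hκdiff u).inv (hκne u)).smul ((hc''.differentiable h1i) u)
  -- key HasDerivAt facts
  have hTder : HasDerivAt t (κ s • n s) s := by
    have h1 : HasDerivAt (deriv c) (deriv (deriv c) s) s :=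
      ((hc'.differentiable h1i) s).hasDerivAt
    have h2 : deriv (deriv c) s = κ s • n s := by
      rw [hn s, smul_smul, mul_inv_cancel₀ (hκne s), one_smul]
    rw [htfun]
    rwa [h2] at h1
  have hNder : HasDerivAt n ((-κ s) • t s + τ s • b s) s := by
    have := (hndiff s).hasDerivAt
    rwa [hτ s] at this
  -- inner product facts
  have hinner1 : ∀ u, ⟪deriv c u, deriv c u⟫ = 1 := by
    intro u
    rw [real_inner_self_eq_norm_sq, harc u]; norm_num
  have hc'c'' : ⟪deriv c s, deriv (deriv c) s⟫ = 0 := by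
    have hd : HasDerivAt (fun u => ⟪deriv c u, deriv c u⟫)
        (⟪deriv c s, deriv (deriv c) s⟫ + ⟪deriv (deriv c) s, deriv c s⟫) s :=
      HasDerivAt.inner ℝ ((hc'.differentiable h1i) s).hasDerivAt
        ((hc'.differentiable h1i) s).hasDerivAt
    have hconst : (fun u => ⟪deriv c u, deriv c u⟫) = fun _ => (1:ℝ) := funext hinner1
    rw [hconst] at hd
    have h0 := (hasDerivAt_const s (1:ℝ)).unique hd
    have h2 := real_inner_comm (deriv (deriv c) s) (deriv c s)
    linarith
  have hTT : ⟪t s, t s⟫ = 1 := by rw [ht s]; exact hinner1 s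
  have hTN : ⟪t s, n s⟫ = 0 := by
    rw [ht s, hn s, real_inner_smul_right, hc'c'', mul_zero]
  have hNT : ⟪n s, t s⟫ = 0 := by rw [real_inner_comm]; exact hTN
  have hNN : ⟪n s, n s⟫ = 1 := by
    rw [hn s, real_inner_smul_left, real_inner_smul_right, real_inner_self_eq_norm_sq, ← hκ s]
    field_simp [hκne s]
  have hTB : ⟪t s, b s⟫ = 0 := by rw [hb s]; exact inner_cross3_left _ _
  have hBT : ⟪b s, t s⟫ = 0 := by rw [real_inner_comm]; exact hTB
  have hNB : ⟪n s, b s⟫ = 0 := by rw [hb s]; exact inner_cross3_right _ _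
  have hBN : ⟪b s, n s⟫ = 0 := by rw [real_inner_comm]; exact hNB
  have hBB : ⟪b s, b s⟫ = 1 := by
    rw [hb s, lagrange, hTT, hNN, hTN]; norm_num
  -- derivative of b
  have hBder : HasDerivAt b ((-τ s) • n s) s := by
    have h1 : HasDerivAt (fun u => cross3 (t u) (n u))
        (cross3 (κ s • n s) (n s) + cross3 (t s) ((-κ s) • t s + τ s • b s)) s :=
      hTder.cross3' hNder
    have h2 : cross3 (κ s • n s) (n s) + cross3 (t s) ((-κ s) • t s + τ s • b s)
        = (-τ s) • n s := by
      rw [cross3_smul_left, cross3_self, cross3_add_right, cross3_smul_right, cross3_self,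
        cross3_smul_right, hb s, cross3_triple, hTN, hTT]
      simp [hTN, hTT]
    rw [h2] at h1
    rwa [hbfun]
  -- scalar derivative facts
  set r1 := deriv r s with hr1def
  set r2 := deriv (deriv r) s with hr2def
  set S := Real.sqrt (1 - r1 ^ 2) with hSdef
  have hrD : HasDerivAt r r1 s := ((hrI.differentiable h1i) s).hasDerivAt
  have hr'D : HasDerivAt (deriv r) r2 s := ((hr'.differentiable h1i) s).hasDerivAt
  have h1mr : 0 < 1 - r1 ^ 2 := by
    have h : |r1| < 1 := by rw [hr1def]; exact hr1 s
    have : r1 ^ 2 < 1 := by nlinarith [abs_nonneg r1, sq_abs r1]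
    linarith
  have hSpos : 0 < S := Real.sqrt_pos.mpr h1mr
  have hSne : S ≠ 0 := ne_of_gt hSpos
  have hS2 : S ^ 2 + r1 ^ 2 = 1 := by
    rw [hSdef, Real.sq_sqrt (le_of_lt h1mr)]; ring
  have hinnerD : HasDerivAt (fun u => 1 - deriv r u ^ 2) (-(2 * r1 * r2)) s := by
    have := (hasDerivAt_const s (1:ℝ)).fun_sub (hr'D.fun_pow 2)
    refine this.congr_deriv ?_
    push_cast
    rw [← hr1def]
    ring
  obtain ⟨Sp, hSder, hSSp⟩ : ∃ p, HasDerivAt (fun u => Real.sqrt (1 - deriv r u ^ 2)) p s ∧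
      S * p + r1 * r2 = 0 := by
    refine ⟨_, (Real.hasDerivAt_sqrt (ne_of_gt h1mr)).comp s hinnerD, ?_⟩
    beta_reduce
    rw [← hSdef]
    field_simp
    ring
  -- derivative in s
  have hFfun : (fun u => α u φ) = fun u => c u - (r u * deriv r u) • t u +
      (r u * Real.sqrt (1 - deriv r u ^ 2)) • (Real.cos φ • n u + Real.sin φ • b u) :=
    funext fun u => hα u φ
  have hcder : HasDerivAt c (t s) s := by
    have := ((hcI.differentiable h1i) s).hasDerivAt
    rwa [← ht s] at this
  have hAder : HasDerivAt (fun u => r u * deriv r u) (r s * r2 + r1 * r1) s :=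
    (hrD.mul hr'D).congr_deriv (by rw [← hr1def]; ring)
  have hRder : HasDerivAt (fun u => r u * Real.sqrt (1 - deriv r u ^ 2))
      (r s * Sp + r1 * S) s :=
    (hrD.mul hSder).congr_deriv (by rw [← hr1def, ← hSdef]; ring)
  have hcombder : HasDerivAt (fun u => Real.cos φ • n u + Real.sin φ • b u)
      (Real.cos φ • ((-κ s) • t s + τ s • b s) + Real.sin φ • ((-τ s) • n s)) s :=
    (hNder.const_smul (Real.cos φ)).add (hBder.const_smul (Real.sin φ))
  have hFder : HasDerivAt (fun u => α u φ)
      (t s - ((r s * r1) • (κ s • n s) + (r s * r2 + r1 * r1) • t s) +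
        ((r s * S) • (Real.cos φ • ((-κ s) • t s + τ s • b s) + Real.sin φ • ((-τ s) • n s)) +
          (r s * Sp + r1 * S) • (Real.cos φ • n s + Real.sin φ • b s))) s := by
    rw [hFfun]
    exact (hcder.sub (hAder.smul hTder)).add (hRder.smul hcombder)
  -- derivative in φ
  have hGfun : (fun v => α s v) = fun v => (c s - (r s * r1) • t s) +
      (r s * S) • (Real.cos v • n s + Real.sin v • b s) := by
    funext v
    rw [hα s v, ← hr1def, ← hSdef]
  have hGder : HasDerivAt (fun v => α s v)
      ((r s * S) • ((-Real.sin φ) • n s + Real.cos φ • b s)) φ := by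
    rw [hGfun]
    exact ((hasDerivAt_const φ (c s - (r s * r1) • t s)).add
      (((((Real.hasDerivAt_cos φ).smul_const (n s)).add
        ((Real.hasDerivAt_sin φ).smul_const (b s)))).const_smul (r s * S))).congr_deriv
      (zero_add _)
  rw [hFder.deriv, hGder.deriv]
  rw [← real_inner_self_eq_norm_sq, lagrange]
  simp only [inner_add_left, inner_add_right, inner_sub_left, inner_sub_right,
    real_inner_smul_left, real_inner_smul_right, inner_neg_left, inner_neg_right,
    hTT, hTN, hNT, hNN, hTB, hBT, hNB, hBN, hBB]
  have hrne : r s ≠ 0 := ne_of_gt (hrpos s)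
  set rr := r s
  set k := κ s
  set tu := τ s
  set cphi := Real.cos φ
  set sphi := Real.sin φ
  have hphi : sphi ^ 2 + cphi ^ 2 = 1 := by
    rw [← Real.sin_sq_add_cos_sq φ]
  have hrhs : rr ^ 4 * (S * k * cphi + r2 - (1 - r1 ^ 2) / rr) ^ 2 =
      rr ^ 2 * (rr * (S * k * cphi + r2) - (1 - r1 ^ 2)) ^ 2 := by
    field_simp
  rw [hrhs]
  linear_combination
    (rr^2*sphi^2 + rr^2*cphi^2 + rr^2*r1^2 + (-3)*rr^2*r1^2*sphi^2 + rr^2*r1^2*sphi^4 + (-3)*rr^2*r1^2*cphi^2 + (2)*rr^2*r1^2*cphi^2*sphi^2 + rr^2*r1^2*cphi^4 + (-1)*rr^2*r1^4 + (2)*rr^2*r1^4*sphi^2 + (-1)*rr^2*r1^4*sphi^4 + (2)*rr^2*r1^4*cphi^2 + (-2)*rr^2*r1^4*cphi^2*sphi^2 + (-1)*rr^2*r1^4*cphi^4 + (-2)*rr^3*r2*sphi^2 + (-2)*rr^3*r2*cphi^2 + (-1)*rr^3*r1^2*r2 + (4)*rr^3*r1^2*r2*sphi^2 + (-2)*rr^3*r1^2*r2*sphi^4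 + (4)*rr^3*r1^2*r2*cphi^2 + (-4)*rr^3*r1^2*r2*cphi^2*sphi^2 + (-2)*rr^3*r1^2*r2*cphi^4 + (-1)*rr^4*tu^2*sphi^2 + rr^4*tu^2*sphi^4 + (-1)*rr^4*tu^2*cphi^2 + (2)*rr^4*tu^2*cphi^2*sphi^2 + rr^4*tu^2*cphi^4 + (-1)*rr^4*k^2*cphi^2 + rr^4*k^2*cphi^2*sphi^2 + rr^4*k^2*cphi^4 + rr^4*r2^2*sphi^2 + rr^4*r2^2*cphi^2 + rr^4*r1^2*tu^2*sphi^2 + (-1)*rr^4*r1^2*tu^2*sphi^4 + rr^4*r1^2*tu^2*cphi^2 + (-2)*rr^4*r1^2*tu^2*cphi^2*sphi^2 + (-1)*rr^4*r1^2*tu^2*cphi^4 + (-1)*rr^4*r1^2*k^2 + rr^4*r1^2*k^2*sphi^2 + (2)*rr^4*r1^2*k^2*cphi^2 + (-1)*rr^4*r1^2*k^2*cphi^2*sphi^2 + (-1)*rr^4*r1^2*k^2*cphi^4 + (-2)*S*rr^3*k*cphi*sphi^2 + (-2)*S*rr^3*k*cphi^3 + (2)*S*rr^4*r2*k*cphi*sphi^2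 + (2)*S*rr^4*r2*k*cphi^3 + (-2)*S*rr^4*r1*k*tu*sphi + (2)*S*rr^4*r1*k*tu*sphi^3 + (2)*S*rr^4*r1*k*tu*cphi^2*sphi + S*Sp*rr^3*r1 + S^2*rr^2*r1^2 + (-1)*S^2*rr^2*r1^2*sphi^2 + S^2*rr^2*r1^2*sphi^4 + (-1)*S^2*rr^2*r1^2*cphi^2 + (2)*S^2*rr^2*r1^2*cphi^2*sphi^2 + S^2*rr^2*r1^2*cphi^4 + (-1)*S^2*rr^4*tu^2*sphi^2 + S^2*rr^4*tu^2*sphi^4 + (-1)*S^2*rr^4*tu^2*cphi^2 + (2)*S^2*rr^4*tu^2*cphi^2*sphi^2 + S^2*rr^4*tu^2*cphi^4 + S^2*rr^4*k^2*cphi^2*sphi^2 + S^2*rr^4*k^2*cphi^4) * hS2 +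
    (rr^3*r1 + (-1)*rr^3*r1^3 + (-1)*rr^4*r1*r2 + rr^4*r1*r2*sphi^2 + (-1)*rr^4*r1*r2*sphi^4 + rr^4*r1*r2*cphi^2 + (-2)*rr^4*r1*r2*cphi^2*sphi^2 + (-1)*rr^4*r1*r2*cphi^4 + (-2)*S*rr^4*r1*k*cphi*sphi^2 + (-2)*S*rr^4*r1*k*cphi^3 + S*Sp*rr^4 + (-1)*S*Sp*rr^4*sphi^2 + S*Sp*rr^4*sphi^4 + (-1)*S*Sp*rr^4*cphi^2 + (2)*S*Sp*rr^4*cphi^2*sphi^2 + S*Sp*rr^4*cphi^4 + S^2*rr^3*r1 + (-2)*S^2*rr^3*r1*sphi^2 + (2)*S^2*rr^3*r1*sphi^4 + (-2)*S^2*rr^3*r1*cphi^2 + (4)*S^2*rr^3*r1*cphi^2*sphi^2 + (2)*S^2*rr^3*r1*cphi^4) * hSSp +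
    (rr^2 + (-3)*rr^2*r1^2 + rr^2*r1^2*sphi^2 + rr^2*r1^2*cphi^2 + (3)*rr^2*r1^4 + (-2)*rr^2*r1^4*sphi^2 + (-2)*rr^2*r1^4*cphi^2 + (-1)*rr^2*r1^6 + rr^2*r1^6*sphi^2 + rr^2*r1^6*cphi^2 + (-2)*rr^3*r2 + (4)*rr^3*r1^2*r2 + (-2)*rr^3*r1^2*r2*sphi^2 + (-2)*rr^3*r1^2*r2*cphi^2 + (-2)*rr^3*r1^4*r2 + (2)*rr^3*r1^4*r2*sphi^2 + (2)*rr^3*r1^4*r2*cphi^2 + rr^4*tu^2*sphi^2 + rr^4*tu^2*cphi^2 + rr^4*k^2*cphi^2 + rr^4*r2^2 + (-2)*rr^4*r1^2*tu^2*sphi^2 + (-2)*rr^4*r1^2*tu^2*cphi^2 + rr^4*r1^2*k^2 + (-2)*rr^4*r1^2*k^2*cphi^2 + (-1)*rr^4*r1^2*r2^2 + rr^4*r1^2*r2^2*sphi^2 + rr^4*r1^2*r2^2*cphi^2 + rr^4*r1^4*tu^2*sphi^2 + rr^4*r1^4*tu^2*cphi^2 + (-1)*rr^4*r1^4*k^2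 + rr^4*r1^4*k^2*cphi^2 + (-2)*S*rr^3*k*cphi + (2)*S*rr^3*r1^2*k*cphi + (2)*S*rr^4*r2*k*cphi + (2)*S*rr^4*r1*k*tu*sphi + (-2)*S*rr^4*r1^3*k*tu*sphi + (-1)*S^2*rr^4*r1^2*k^2 + S^2*Sp^2*rr^4 + (-2)*S^3*rr^4*r1*k*tu*sphi + (2)*S^3*Sp*rr^3*r1 + S^4*rr^2*r1^2 + (-1)*S^4*rr^4*tu^2*sphi^2 + (-1)*S^4*rr^4*tu^2*cphi^2) * hphi
end

section
/- Define the derivative along the vector field V by D_V f(s,φ) = ∂f/∂s(s,φ) − (τ(s) + (r'(s)/√(1−r'(s)²))·κ(s)·sin φ)·∂f/∂φ(s,φ). Then for every (s,φ), D_V α(s,φ) = A(s,φ)·[t(s) + (r'(s)/√(1−r'(s)²))·(cos φ·n(s) + sin φ·b(s))], where A(s,φ) = 1 − r'(s)² − r(s)r''(s) − κ(s)r(s)·cos φ·√(1−r'(s)²). -/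
open scoped RealInnerProductSpace

lemma hasDerivAt_comp_proj' {f : ℝ → EuclideanSpace ℝ (Fin 3)} {f' : EuclideanSpace ℝ (Fin 3)}
    {x : ℝ} (hf : HasDerivAt f f' x) (i : Fin 3) :
    HasDerivAt (fun y => f y i) (f' i) x :=
  (EuclideanSpace.proj i : EuclideanSpace ℝ (Fin 3) →L[ℝ] ℝ).hasFDerivAt.comp_hasDerivAt x hf

lemma hasDerivAt_cross3' {f g : ℝ → EuclideanSpace ℝ (Fin 3)}
    {f' g' : EuclideanSpace ℝ (Fin 3)} {x : ℝ}
    (hf : HasDerivAt f f' x) (hg : HasDerivAt g g' x) :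
    HasDerivAt (fun y => cross3 (f y) (g y)) (cross3 f' (g x) + cross3 (f x) g') x := by
  have h0 := hasDerivAt_comp_proj' hf
  have h1 := hasDerivAt_comp_proj' hg
  have k0 : HasDerivAt (fun y => cross3 (f y) (g y) (0 : Fin 3))
      ((cross3 f' (g x) + cross3 (f x) g') (0 : Fin 3)) x := by
    exact (((h0 1).mul (h1 2)).sub ((h0 2).mul (h1 1))).congr_deriv
      (by show _ = f' 1 * g x 2 - f' 2 * g x 1 + (f x 1 * g' 2 - f x 2 * g' 1); ring)
  have k1 : HasDerivAt (fun y => cross3 (f y) (g y) (1 : Fin 3))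
      ((cross3 f' (g x) + cross3 (f x) g') (1 : Fin 3)) x := by
    exact (((h0 2).mul (h1 0)).sub ((h0 0).mul (h1 2))).congr_deriv
      (by show _ = f' 2 * g x 0 - f' 0 * g x 2 + (f x 2 * g' 0 - f x 0 * g' 2); ring)
  have k2 : HasDerivAt (fun y => cross3 (f y) (g y) (2 : Fin 3))
      ((cross3 f' (g x) + cross3 (f x) g') (2 : Fin 3)) x := by
    exact (((h0 0).mul (h1 1)).sub ((h0 1).mul (h1 0))).congr_deriv
      (by show _ = f' 0 * g x 1 - f' 1 * g x 0 + (f x 0 * g' 1 - f x 1 * g' 0); ring)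
  have key : ∀ i : Fin 3, HasDerivAt (fun y => cross3 (f y) (g y) i)
      ((cross3 f' (g x) + cross3 (f x) g') i) x := by
    intro i; fin_cases i
    · exact k0
    · exact k1
    · exact k2
  have hpi : HasDerivAt (fun y => (fun i => cross3 (f y) (g y) i : Fin 3 → ℝ))
      (fun i => (cross3 f' (g x) + cross3 (f x) g') i) x := hasDerivAt_pi.mpr key
  exact ((EuclideanSpace.equiv (Fin 3) ℝ).symm :
    (Fin 3 → ℝ) ≃L[ℝ] EuclideanSpace ℝ (Fin 3)).hasFDerivAt.comp_hasDerivAt x hpi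

lemma cross3_calc' (u v : EuclideanSpace ℝ (Fin 3)) (T K : ℝ)
    (h1 : u 0 * v 0 + u 1 * v 1 + u 2 * v 2 = 0)
    (h2 : u 0 ^ 2 + u 1 ^ 2 + u 2 ^ 2 = 1) :
    cross3 (K • v) v + cross3 u ((-K) • u + T • cross3 u v) = (-T) • v := by
  have e0 : ∀ (w z : EuclideanSpace ℝ (Fin 3)), cross3 w z 0 = w 1 * z 2 - w 2 * z 1 := fun _ _ => rfl
  have e1 : ∀ (w z : EuclideanSpace ℝ (Fin 3)), cross3 w z 1 = w 2 * z 0 - w 0 * z 2 := fun _ _ => rfl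
  have e2 : ∀ (w z : EuclideanSpace ℝ (Fin 3)), cross3 w z 2 = w 0 * z 1 - w 1 * z 0 := fun _ _ => rfl
  ext i
  fin_cases i
  · show cross3 (K • v) v 0 + cross3 u ((-K) • u + T • cross3 u v) 0 = ((-T) • v) 0
    simp only [e0, e1, e2, PiLp.smul_apply, PiLp.add_apply, smul_eq_mul]
    linear_combination (T * u 0) * h1 - (T * v 0) * h2
  · show cross3 (K • v) v 1 + cross3 u ((-K) • u + T • cross3 u v) 1 = ((-T) • v) 1
    simp only [e0, e1, e2, PiLp.smul_apply, PiLp.add_apply, smul_eq_mul]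
    linear_combination (T * u 1) * h1 - (T * v 1) * h2
  · show cross3 (K • v) v 2 + cross3 u ((-K) • u + T • cross3 u v) 2 = ((-T) • v) 2
    simp only [e0, e1, e2, PiLp.smul_apply, PiLp.add_apply, smul_eq_mul]
    linear_combination (T * u 2) * h1 - (T * v 2) * h2

theorem canal_surface_DV_alpha
    (c : ℝ → EuclideanSpace ℝ (Fin 3)) (r κ τ : ℝ → ℝ)
    (t n b : ℝ → EuclideanSpace ℝ (Fin 3))
    (hc : ContDiff ℝ (⊤ : ℕ∞) c) (hr : ContDiff ℝ (⊤ : ℕ∞) r)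
    (harc : ∀ s, ‖deriv c s‖ = 1)
    (hκ : ∀ s, κ s = ‖deriv (deriv c) s‖)
    (hκpos : ∀ s, 0 < κ s)
    (ht : ∀ s, t s = deriv c s)
    (hn : ∀ s, n s = (κ s)⁻¹ • deriv (deriv c) s)
    (hb : ∀ s, b s = cross3 (t s) (n s))
    (hτ : ∀ s, deriv n s = (-κ s) • t s + τ s • b s)
    (hrpos : ∀ s, 0 < r s)
    (hr1 : ∀ s, |deriv r s| < 1)
    (α : ℝ → ℝ → EuclideanSpace ℝ (Fin 3))
    (hα : ∀ s φ, α s φ = c s - (r s * deriv r s) • t s +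
      (r s * Real.sqrt (1 - deriv r s ^ 2)) • (Real.cos φ • n s + Real.sin φ • b s)) :
    ∀ s φ,
      deriv (fun u => α u φ) s -
        (τ s + deriv r s / Real.sqrt (1 - deriv r s ^ 2) * κ s * Real.sin φ) •
          deriv (fun v => α s v) φ =
      (1 - deriv r s ^ 2 - r s * deriv (deriv r) s -
        κ s * r s * Real.cos φ * Real.sqrt (1 - deriv r s ^ 2)) •
      (t s + (deriv r s / Real.sqrt (1 - deriv r s ^ 2)) •
        (Real.cos φ • n s + Real.sin φ • b s)) := by
  intro s φ
  -- smoothness facts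
  have hc1 : ContDiff ℝ (⊤ : ℕ∞) (deriv c) := (contDiff_infty_iff_deriv.mp (hc.of_le (by simp))).2
  have hc2 : ContDiff ℝ (⊤ : ℕ∞) (deriv (deriv c)) := (contDiff_infty_iff_deriv.mp hc1).2
  have hrd : ContDiff ℝ (⊤ : ℕ∞) (deriv r) := (contDiff_infty_iff_deriv.mp (hr.of_le (by simp))).2
  have hκne : κ s ≠ 0 := ne_of_gt (hκpos s)
  set R := r s with hR
  set R' := deriv r s with hR'
  set R'' := deriv (deriv r) s with hR''
  set K := κ s with hK
  set T := τ s with hT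
  set Q := Real.sqrt (1 - R' ^ 2) with hQ
  have hR'sq : R' ^ 2 < 1 := by nlinarith [sq_abs R', hr1 s, abs_nonneg R']
  have hQpos : 0 < Q := Real.sqrt_pos.mpr (by linarith)
  have hQne : Q ≠ 0 := ne_of_gt hQpos
  have hQsq : Q ^ 2 = 1 - R' ^ 2 := Real.sq_sqrt (by linarith)
  -- HasDerivAt for frame
  have hcd : ∀ x, HasDerivAt c (deriv c x) x := fun x =>
    ((contDiff_infty_iff_deriv.mp (hc.of_le (by simp))).1 x).hasDerivAt
  have hc2v : deriv (deriv c) s = K • n s := by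
    rw [hn s, smul_smul, ← hK, mul_inv_cancel₀ hκne, one_smul]
  have h_t : HasDerivAt t (K • n s) s := by
    have : HasDerivAt (deriv c) (deriv (deriv c) s) s := (hc1.differentiable (by simp) s).hasDerivAt
    rw [hc2v] at this
    exact this.congr_of_eventuallyEq (Filter.Eventually.of_forall fun x => (ht x))
  -- differentiability of n
  have hc2ne : deriv (deriv c) s ≠ 0 := by
    intro h
    have := hκ s
    rw [h, norm_zero] at this
    exact hκne (this.trans rfl)
  have hκdiff : DifferentiableAt ℝ κ s := by
    have : DifferentiableAt ℝ (fun x => ‖deriv (deriv c) x‖) s :=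
      (hc2.differentiable (by simp) s).norm ℝ hc2ne
    exact this.congr_of_eventuallyEq (Filter.Eventually.of_forall fun x => (hκ x))
  have hndiff : DifferentiableAt ℝ n s := by
    have : DifferentiableAt ℝ (fun x => (κ x)⁻¹ • deriv (deriv c) x) s :=
      (hκdiff.inv hκne).smul (hc2.differentiable (by simp) s)
    exact this.congr_of_eventuallyEq (Filter.Eventually.of_forall fun x => (hn x))
  have h_n : HasDerivAt n ((-K) • t s + T • b s) s := by
    have := hndiff.hasDerivAt
    rwa [hτ s] at this
  -- orthonormality
  have htn0 : t s 0 * n s 0 + t s 1 * n s 1 + t s 2 * n s 2 = 0 := by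
    have hinner : ⟪deriv c s, deriv (deriv c) s⟫ = 0 := by
      have hconst : HasDerivAt (fun x => ⟪deriv c x, deriv c x⟫) 0 s := by
        have : (fun x => ⟪deriv c x, deriv c x⟫) = fun _ => (1 : ℝ) := by
          funext x
          rw [real_inner_self_eq_norm_sq, harc x, one_pow]
        rw [this]; exact hasDerivAt_const s 1
      have hprod : HasDerivAt (fun x => ⟪deriv c x, deriv c x⟫)
          (⟪deriv c s, deriv (deriv c) s⟫ + ⟪deriv (deriv c) s, deriv c s⟫) s :=
        HasDerivAt.inner ℝ ((hc1.differentiable (by simp) s).hasDerivAt)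
          ((hc1.differentiable (by simp) s).hasDerivAt)
      have h2 := hconst.unique hprod
      have hcomm : ⟪deriv (deriv c) s, deriv c s⟫ = ⟪deriv c s, deriv (deriv c) s⟫ :=
        real_inner_comm _ _
      linarith
    have : ⟪t s, n s⟫ = 0 := by
      rw [ht s, hn s, real_inner_smul_right, hinner, mul_zero]
    rw [PiLp.inner_apply, Fin.sum_univ_three] at this
    simp [RCLike.inner_apply, conj_trivial] at this
    linarith
  have htt1 : t s 0 ^ 2 + t s 1 ^ 2 + t s 2 ^ 2 = 1 := by
    have : ⟪t s, t s⟫ = 1 := by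
      rw [ht s, real_inner_self_eq_norm_sq, harc s, one_pow]
    rw [PiLp.inner_apply, Fin.sum_univ_three] at this
    simpa [RCLike.inner_apply, conj_trivial, sq] using this
  -- derivative of b
  have h_b : HasDerivAt b ((-T) • n s) s := by
    have H := hasDerivAt_cross3' h_t h_n
    have Hval : cross3 (K • n s) (n s) + cross3 (t s) ((-K) • t s + T • cross3 (t s) (n s)) =
        (-T) • n s := cross3_calc' (t s) (n s) T K htn0 htt1
    rw [← hb s] at Hval
    have H2 : HasDerivAt (fun y => cross3 (t y) (n y)) ((-T) • n s) s := by
      rw [← Hval]; exact H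
    exact H2.congr_of_eventuallyEq (Filter.Eventually.of_forall fun x => (hb x))
  -- scalar derivatives
  have hRd : HasDerivAt r R' s := (hr.differentiable (by simp) s).hasDerivAt
  have hR'd : HasDerivAt (deriv r) R'' s := (hrd.differentiable (by simp) s).hasDerivAt
  have hQd : HasDerivAt (fun x => Real.sqrt (1 - deriv r x ^ 2))
      (1 / (2 * Q) * (0 - 2 * R' ^ 1 * R'')) s := by
    have hne : 1 - R' ^ 2 ≠ 0 := by nlinarith
    have hin : HasDerivAt (fun x => 1 - deriv r x ^ 2) (0 - 2 * R' ^ 1 * R'') s :=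
      (hasDerivAt_const s 1).sub (hR'd.pow 2)
    exact (Real.hasDerivAt_sqrt hne).comp s hin
  -- s-derivative of α
  have Hc : HasDerivAt c (t s) s := by
    have := hcd s; rwa [← ht s] at this
  have Hp : HasDerivAt (fun u => r u * deriv r u) (R * R'' + R' * R') s := by
    have := hRd.mul hR'd
    exact this.congr_deriv (by ring)
  have Hpt : HasDerivAt (fun u => (r u * deriv r u) • t u)
      ((R * R') • (K • n s) + (R * R'' + R' * R') • t s) s := Hp.smul h_t
  have Hq : HasDerivAt (fun u => r u * Real.sqrt (1 - deriv r u ^ 2))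
      (R' * Q + R * (1 / (2 * Q) * (0 - 2 * R' ^ 1 * R''))) s := by
    have := hRd.mul hQd
    exact this.congr_deriv (by ring)
  have Hw : HasDerivAt (fun u => Real.cos φ • n u + Real.sin φ • b u)
      (Real.cos φ • ((-K) • t s + T • b s) + Real.sin φ • ((-T) • n s)) s :=
    (h_n.const_smul (Real.cos φ)).add (h_b.const_smul (Real.sin φ))
  have Hqw : HasDerivAt (fun u => (r u * Real.sqrt (1 - deriv r u ^ 2)) •
      (Real.cos φ • n u + Real.sin φ • b u))
      ((R * Q) • (Real.cos φ • ((-K) • t s + T • b s) + Real.sin φ • ((-T) • n s)) +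
       (R' * Q + R * (1 / (2 * Q) * (0 - 2 * R' ^ 1 * R''))) •
         (Real.cos φ • n s + Real.sin φ • b s)) s := Hq.smul Hw
  have Hs : HasDerivAt (fun u => α u φ)
      (t s - ((R * R') • (K • n s) + (R * R'' + R' * R') • t s) +
       ((R * Q) • (Real.cos φ • ((-K) • t s + T • b s) + Real.sin φ • ((-T) • n s)) +
        (R' * Q + R * (1 / (2 * Q) * (0 - 2 * R' ^ 1 * R''))) •
          (Real.cos φ • n s + Real.sin φ • b s))) s := by
    have := (Hc.sub Hpt).add Hqw
    exact this.congr_of_eventuallyEq (Filter.Eventually.of_forall fun u => (hα u φ))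
  -- φ-derivative of α
  have Hφ : HasDerivAt (fun v => α s v)
      ((R * Q) • ((-Real.sin φ) • n s + Real.cos φ • b s)) φ := by
    have hin : HasDerivAt (fun v => Real.cos v • n s + Real.sin v • b s)
        ((-Real.sin φ) • n s + Real.cos φ • b s) φ :=
      ((Real.hasDerivAt_cos φ).smul_const (n s)).add ((Real.hasDerivAt_sin φ).smul_const (b s))
    have := ((hasDerivAt_const φ (c s - (R * R') • t s)).add (hin.const_smul (R * Q)))
    have h2 : HasDerivAt (fun v => c s - (R * R') • t s +
        (R * Q) • (Real.cos v • n s + Real.sin v • b s))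
        ((R * Q) • ((-Real.sin φ) • n s + Real.cos φ • b s)) φ := by
      have := this.congr_deriv (by rw [zero_add])
      exact this
    exact h2.congr_of_eventuallyEq (Filter.Eventually.of_forall fun v => (hα s v))
  rw [Hs.deriv, Hφ.deriv]
  match_scalars
  · field_simp
    ring
  · field_simp
    ring_nf
    linear_combination (2*R*R'*K*Q) * (Real.sin_sq_add_cos_sq φ) +
      (2*R'*Real.cos φ) * hQsq
  · field_simp
    ring_nf
    linear_combination (2*R'*Real.sin φ) * hQsq
end
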